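/- Let z ≥ 1, t₁, …, t_z ∈ {1, −1} and k₁, …, k_z ∈ {0, …, n−1}. Then the element w = x_{k₁}^{t₁} ⋯ x_{k_z}^{t_z} has reduced length z in F_n (i.e. the displayed word is reduced) if and only if the element w′ = φ_F(x_{k₁}^{t₁}) · Φ_{t₁ d}(φ_F(x_{k₂}^{t₂})) ⋯ Φ_{(t₁+⋯+t_{z−1}) d}(φ_F(x_{k_z}^{t_z})) has reduced length z in F_n. -/

import Mathlib

open scoped Fin.IntCast

/-- The shift automorphism `Φ_s` of the free group `F_n`, sending `x_i` to `x_{[i-s]}`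
(indices read modulo `n`). -/
def Phi (n : ℕ) [NeZero n] (s : ℤ) : FreeGroup (Fin n) ≃* FreeGroup (Fin n) :=
  FreeGroup.freeGroupCongr (Equiv.subRight ((s : Fin n)))

/-- The action of `ℤ` on `F_n` by shifting: `t` acts as `Φ_t`. -/
def shiftAction (n : ℕ) [NeZero n] : Multiplicative ℤ →* MulAut (FreeGroup (Fin n)) :=
  zpowersHom (MulAut (FreeGroup (Fin n))) (Phi n 1)

/-- The group `G = F_n ⋊ ℤ`, in which `y⁻¹ xᵢ y = x_{[i+1]}`.  Every element is uniquely
`g₁ yᵗ` with `g₁ ∈ F_n` (the free component, `SemidirectProduct.left`) and `t ∈ ℤ`. -/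
abbrev GSD (n : ℕ) [NeZero n] :=
  SemidirectProduct (FreeGroup (Fin n)) (Multiplicative ℤ) (shiftAction n)

/-- The embedding of the free component `F_n` into `G`. -/
def fg (n : ℕ) [NeZero n] (w : FreeGroup (Fin n)) : GSD n := SemidirectProduct.inl w

/-- The generator `x_i` of `G`. -/
def xg (n : ℕ) [NeZero n] (i : Fin n) : GSD n := fg n (FreeGroup.of i)

/-- The generator `y` of `G`. -/
def yg (n : ℕ) [NeZero n] : GSD n := SemidirectProduct.inr (Multiplicative.ofAdd 1)

/-- The exponent sum of an element of the free group: image under the homomorphism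
sending every generator to `1 ∈ ℤ`. -/
def expSum (n : ℕ) (w : FreeGroup (Fin n)) : ℤ :=
  Multiplicative.toAdd (FreeGroup.lift (fun _ => Multiplicative.ofAdd (1 : ℤ)) w)

/-- `phiF n εx εy d i r` is `φ_F(x_i^r)` for `r ∈ {1, -1}`:
`φ_F(x_i) = x_{[ε_y i]}^{ε_x}` and `φ_F(x_i⁻¹) = x_{[ε_y i + d]}^{-ε_x}`. -/
def phiF (n : ℕ) [NeZero n] (εx εy d : ℤ) (i : Fin n) (r : ℤ) : FreeGroup (Fin n) :=
  if r = 1 then (FreeGroup.of ((εy : Fin n) * i)) ^ εx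
  else (FreeGroup.of ((εy : Fin n) * i + (d : Fin n))) ^ (-εx)

/-- `phiFInv n εx εy d i r` is `φ⁻¹_F(x_i^r)` for `r ∈ {1, -1}`:
`φ⁻¹_F(x_i^r) = x_{[ε_y i]}` if `ε_x r = 1` and `φ⁻¹_F(x_i^r) = x_{[ε_y (i-d)]}⁻¹` if `ε_x r = -1`. -/
def phiFInv (n : ℕ) [NeZero n] (εx εy d : ℤ) (i : Fin n) (r : ℤ) : FreeGroup (Fin n) :=
  if εx * r = 1 then FreeGroup.of ((εy : Fin n) * i)
  else (FreeGroup.of ((εy : Fin n) * (i - (d : Fin n))))⁻¹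

/-!
Both words are products of `z` single letters, so each has reduced length `z` iff no two
adjacent letters cancel. The `j`-th letter of `w'` is `x_{[ε_y k_j + δ_j d - S_j]}` with sign
`t_j ε_x`, where `δ_j = [t_j = -1]` and `S_j = (t₁ + ⋯ + t_{j-1}) d`. Two adjacent letters can
only cancel when `t_{j+1} = -t_j`, and then `S_{j+1} = S_j + t_j d` makes the corrections
`δ_j d - S_j` and `δ_{j+1} d - S_{j+1}` agree; as `ε_y` is a unit mod `n`, the letters of `w'`
cancel exactly when those of `w` do.
-/

open scoped Fin.CommRing

namespace FreeGroup

variable {α : Type*}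

theorem of_zpow_eq_mk (a : α) {t : ℤ} (ht : t = 1 ∨ t = -1) :
    of a ^ t = mk [(a, decide (t = 1))] := by
  rcases ht with rfl | rfl
  · simp [of]
  · simp [of, inv_mk, invRev]

theorem prod_ofFn_mk_singleton {z : ℕ} (g : Fin z → α × Bool) :
    (List.ofFn fun j => mk [g j]).prod = mk (List.ofFn g) := by
  induction z with
  | zero => rfl
  | succ z ih => simp [List.ofFn_succ, ih, mul_mk]

variable [DecidableEq α]

theorem norm_mk_eq_length_iff (L : List (α × Bool)) : norm (mk L) = L.length ↔ IsReduced L := by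
  rw [isReduced_iff_reduce_eq, norm, toWord_mk]
  exact ⟨Red.sublist reduce.red |>.eq_of_length, fun h => by rw [h]⟩

theorem norm_mk_ofFn_eq_iff {z : ℕ} (g : Fin z → α × Bool) :
    norm (mk (List.ofFn g)) = z ↔ ∀ (i) (hi : i + 1 < z),
      (g ⟨i, by omega⟩).1 = (g ⟨i + 1, hi⟩).1 → (g ⟨i, by omega⟩).2 = (g ⟨i + 1, hi⟩).2 := by
  have h := norm_mk_eq_length_iff (List.ofFn g)
  rw [List.length_ofFn] at h
  rw [h, IsReduced, List.isChain_ofFn]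

end FreeGroup

theorem Fin.sum_Iio_mk_add_one {M : Type*} [AddCommMonoid M] {z i : ℕ} (hi : i + 1 < z)
    (f : Fin z → M) :
    ∑ a ∈ Finset.Iio ⟨i + 1, hi⟩, f a = ∑ a ∈ Finset.Iio ⟨i, by omega⟩, f a + f ⟨i, by omega⟩ := by
  have : Finset.Iio (⟨i + 1, hi⟩ : Fin z) = insert ⟨i, by omega⟩ (Finset.Iio ⟨i, by omega⟩) := by
    ext a
    simp only [Finset.mem_Iio, Finset.mem_insert, Fin.lt_def, Fin.ext_iff]
    omega
  rw [this, Finset.sum_insert (by simp), add_comm]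

theorem Phi_mk (n : ℕ) [NeZero n] (s : ℤ) (L : List (Fin n × Bool)) :
    Phi n s (FreeGroup.mk L) = FreeGroup.mk (L.map fun x => (x.1 - (s : Fin n), x.2)) := by
  simp [Phi, FreeGroup.map.mk, Equiv.subRight]

def phiFLetter (n : ℕ) [NeZero n] (εx εy d s : ℤ) (i : Fin n) (r : ℤ) : Fin n × Bool :=
  ((εy : Fin n) * i + (if r = 1 then 0 else (d : Fin n)) - (s : Fin n), decide (r = εx))

theorem Phi_phiF_eq_mk (n : ℕ) [NeZero n] {εx : ℤ} (εy d s : ℤ) (i : Fin n) {r : ℤ}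
    (hεx : εx = 1 ∨ εx = -1) (hr : r = 1 ∨ r = -1) :
    Phi n s (phiF n εx εy d i r) = FreeGroup.mk [phiFLetter n εx εy d s i r] := by
  rcases hr with rfl | rfl
  · rw [phiF, if_pos rfl, FreeGroup.of_zpow_eq_mk _ hεx, Phi_mk]
    rcases hεx with rfl | rfl <;> simp [phiFLetter]
  · rw [phiF, if_neg (by norm_num), FreeGroup.of_zpow_eq_mk _ (by omega), Phi_mk]
    rcases hεx with rfl | rfl <;> simp [phiFLetter]

theorem phiFLetter_adjacent_iff (n : ℕ) [NeZero n] {εx εy : ℤ} (d s : ℤ) (k k' : Fin n)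
    {t t' : ℤ} (hεx : εx = 1 ∨ εx = -1) (hεy : εy = 1 ∨ εy = -1) (ht : t = 1 ∨ t = -1)
    (ht' : t' = 1 ∨ t' = -1) :
    (k = k' → decide (t = 1) = decide (t' = 1)) ↔
      ((phiFLetter n εx εy d s k t).1 = (phiFLetter n εx εy d (s + t * d) k' t').1 →
        (phiFLetter n εx εy d s k t).2 = (phiFLetter n εx εy d (s + t * d) k' t').2) := by
  by_cases htt : t = t'
  · simp [phiFLetter, htt]
  have hdiff : (phiFLetter n εx εy d s k t).1 - (phiFLetter n εx εy d (s + t * d) k' t').1 =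
      (εy : Fin n) * (k - k') := by
    rcases ht with rfl | rfl <;> rcases ht' with rfl | rfl <;> simp [phiFLetter] at htt ⊢ <;>
      ring
  have hεy_unit : IsUnit (εy : Fin n) := by rcases hεy with rfl | rfl <;> simp
  have hsign : decide (t = 1) ≠ decide (t' = 1) ∧
      (phiFLetter n εx εy d s k t).2 ≠ (phiFLetter n εx εy d (s + t * d) k' t').2 := by
    rcases ht with rfl | rfl <;> rcases ht' with rfl | rfl <;> rcases hεx with rfl | rfl <;>
      simp [phiFLetter] at htt ⊢
  simp only [hsign.1, hsign.2, imp_false, not_iff_not]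
  rw [← sub_eq_zero (a := (phiFLetter n εx εy d s k t).1), hdiff, hεy_unit.mul_right_eq_zero,
    sub_eq_zero]

theorem statement_16_general (n : ℕ) [NeZero n] (εx εy d : ℤ)
    (hεx : εx = 1 ∨ εx = -1) (hεy : εy = 1 ∨ εy = -1)
    (z : ℕ) (t : Fin z → ℤ) (ht : ∀ j, t j = 1 ∨ t j = -1)
    (k : Fin z → Fin n) :
    FreeGroup.norm ((List.ofFn fun j => FreeGroup.of (k j) ^ t j).prod) = z ↔
      FreeGroup.norm ((List.ofFn fun j =>
        Phi n ((∑ i ∈ Finset.Iio j, t i) * d) (phiF n εx εy d (k j) (t j))).prod) = z := by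
  simp only [FreeGroup.of_zpow_eq_mk _ (ht _), Phi_phiF_eq_mk n εy d _ _ hεx (ht _),
    FreeGroup.prod_ofFn_mk_singleton, FreeGroup.norm_mk_ofFn_eq_iff]
  refine forall₂_congr fun i hi => ?_
  rw [Fin.sum_Iio_mk_add_one hi, add_mul]
  exact phiFLetter_adjacent_iff n d _ _ _ hεx hεy (ht _) (ht _)

/-- `w = x_{k₁}^{t₁} ⋯ x_{k_z}^{t_z}` has reduced length `z` in `F_n` iff
`w' = φ_F(x_{k₁}^{t₁}) ⬝ Φ_{t₁ d}(φ_F(x_{k₂}^{t₂})) ⋯ Φ_{(t₁+⋯+t_{z-1}) d}(φ_F(x_{k_z}^{t_z}))`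
has reduced length `z` in `F_n`. -/
theorem statement_16 (n : ℕ) (hn : 2 ≤ n) [NeZero n] (εx εy d : ℤ)
    (hεx : εx = 1 ∨ εx = -1) (hεy : εy = 1 ∨ εy = -1)
    (z : ℕ) (hz : 1 ≤ z) (t : Fin z → ℤ) (ht : ∀ j, t j = 1 ∨ t j = -1)
    (k : Fin z → Fin n) :
    FreeGroup.norm ((List.ofFn fun j => FreeGroup.of (k j) ^ t j).prod) = z ↔
      FreeGroup.norm ((List.ofFn fun j =>
        Phi n ((∑ i ∈ Finset.Iio j, t i) * d) (phiF n εx εy d (k j) (t j))).prod) = z :=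
  statement_16_general n εx εy d hεx hεy z t ht k
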